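/- Infima of complete extensions: Let F = ⟨A, →⟩ be an AAF with n ≥ ℓ ≥ m, and let S be a nonempty set of ℓmn-complete extensions of F. Define W = ⋃{X ⊆ A : X is ℓmn-admissible and X ⊆ ⋂S}. Then W is an ℓmn-complete extension of F, W ⊆ E for every E ∈ S, and every ℓmn-complete extension E′ with E′ ⊆ E for all E ∈ S satisfies E′ ⊆ W; that is, W is the infimum of S in the poset of ℓmn-complete extensions ordered by inclusion. -/
import Mathlib


open Set

variable {A : Type*}

/-- Graded neutrality function `N_ℓ`: arguments not attacked by `ℓ` distinct members of `E`. -/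
def gradedNeutrality (att : A → A → Prop) (ℓ : ℕ) (E : Set A) : Set A :=
  {a | ¬ ∃ B : Finset A, B.card = ℓ ∧ (↑B : Set A) ⊆ E ∧ ∀ b ∈ B, att b a}

/-- Graded defense function `D_n^m = N_m ∘ N_n`. -/
def gradedDefense (att : A → A → Prop) (m n : ℕ) (E : Set A) : Set A :=
  gradedNeutrality att m (gradedNeutrality att n E)

/-- `E` is ℓ-conflict-free. -/
def IsConflictFree (att : A → A → Prop) (ℓ : ℕ) (E : Set A) : Prop :=
  E ⊆ gradedNeutrality att ℓ E

/-- `E` is ℓmn-admissible. -/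
def IsAdmissible (att : A → A → Prop) (ℓ m n : ℕ) (E : Set A) : Prop :=
  E ⊆ gradedNeutrality att ℓ E ∧ E ⊆ gradedDefense att m n E

/-- `E` is an ℓmn-complete extension. -/
def IsCompleteExt (att : A → A → Prop) (ℓ m n : ℕ) (E : Set A) : Prop :=
  E ⊆ gradedNeutrality att ℓ E ∧ E = gradedDefense att m n E

/-- `E` is an ℓmn-stable extension. -/
def IsStableExt (att : A → A → Prop) (ℓ m n : ℕ) (E : Set A) : Prop :=
  E = gradedNeutrality att n E ∧ E = gradedNeutrality att m E ∧
    E ⊆ gradedNeutrality att ℓ E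

/-- The AAF is finitary: every argument has finitely many attackers. -/
def IsFinitary (att : A → A → Prop) : Prop :=
  ∀ a : A, {b | att b a}.Finite

/-- `E_η^+`: arguments attacked by `η` distinct members of `E`. -/
def rangePlus (att : A → A → Prop) (η : ℕ) (E : Set A) : Set A :=
  {a | ∃ B : Finset A, B.card = η ∧ (↑B : Set A) ⊆ E ∧ ∀ b ∈ B, att b a}

/-- The range `E ∪ E_η^+` of `E`. -/
def rangeOf (att : A → A → Prop) (η : ℕ) (E : Set A) : Set A :=
  E ∪ rangePlus att η E

/-- Reduced meet of the family `X` modulo the ultrafilter `D`. -/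
def reducedMeet {I : Type*} (D : Ultrafilter I) (X : I → Set A) : Set A :=
  {a | {i | a ∈ X i} ∈ D}

/-- `L` is the least fixed point of `f` containing `E`. -/
def IsLfpOver (f : Set A → Set A) (E L : Set A) : Prop :=
  f L = L ∧ E ⊆ L ∧ ∀ L', f L' = L' → E ⊆ L' → L ⊆ L'

/-- `r` is well-founded on `S`: there is no infinite `r`-decreasing sequence in `S`. -/
def WellFoundedOnSet (r : A → A → Prop) (S : Set A) : Prop :=
  ¬ ∃ f : ℕ → A, (∀ i, f i ∈ S) ∧ ∀ i, r (f (i + 1)) (f i)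


lemma neut_anti {att : A → A → Prop} {ℓ : ℕ} {E E' : Set A} (h : E ⊆ E') :
    gradedNeutrality att ℓ E' ⊆ gradedNeutrality att ℓ E := by
  intro a ha hex
  obtain ⟨B, hc, hB, hatt⟩ := hex
  exact ha ⟨B, hc, hB.trans h, hatt⟩

lemma def_mono {att : A → A → Prop} {m n : ℕ} {E E' : Set A} (h : E ⊆ E') :
    gradedDefense att m n E ⊆ gradedDefense att m n E' :=
  neut_anti (neut_anti h)

/-- Infima of complete extensions: if `n ≥ ℓ ≥ m` and `S` is a nonempty set of
ℓmn-complete extensions, then `W = ⋃ {X : X ℓmn-admissible and X ⊆ ⋂ S}` is an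
ℓmn-complete extension which is the infimum of `S` among ℓmn-complete extensions. -/
theorem inf_complete_extensions {A : Type*} [Nonempty A] (att : A → A → Prop)
    (ℓ m n : ℕ) (hℓ : 0 < ℓ) (hm : 0 < m) (hn : 0 < n)
    (hml : m ≤ ℓ) (hln : ℓ ≤ n)
    (S : Set (Set A)) (hSne : S.Nonempty)
    (hS : ∀ E ∈ S, IsCompleteExt att ℓ m n E) :
    IsCompleteExt att ℓ m n
      (⋃₀ {X : Set A | IsAdmissible att ℓ m n X ∧ X ⊆ ⋂₀ S}) ∧
    (∀ E ∈ S, (⋃₀ {X : Set A | IsAdmissible att ℓ m n X ∧ X ⊆ ⋂₀ S}) ⊆ E) ∧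
    (∀ E' : Set A, IsCompleteExt att ℓ m n E' → (∀ E ∈ S, E' ⊆ E) →
      E' ⊆ ⋃₀ {X : Set A | IsAdmissible att ℓ m n X ∧ X ⊆ ⋂₀ S}) := by
  obtain ⟨E0, hE0⟩ := hSne
  set Fam := {X : Set A | IsAdmissible att ℓ m n X ∧ X ⊆ ⋂₀ S} with hFam
  set W := ⋃₀ Fam with hWdef
  have hWint : W ⊆ ⋂₀ S := sUnion_subset fun X hX => hX.2
  have hWE : ∀ E ∈ S, W ⊆ E := fun E hE => hWint.trans (sInter_subset_of_mem hE)
  have hWcf : W ⊆ gradedNeutrality att ℓ W :=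
    (hWE E0 hE0).trans ((hS E0 hE0).1.trans (neut_anti (hWE E0 hE0)))
  have hWD : W ⊆ gradedDefense att m n W := by
    intro a ha
    obtain ⟨X, hX, haX⟩ := ha
    exact def_mono (subset_sUnion_of_mem hX) (hX.1.2 haX)
  have hDWint : gradedDefense att m n W ⊆ ⋂₀ S := by
    intro a ha E hE
    have := def_mono (hWE E hE) ha
    rwa [← (hS E hE).2] at this
  have hDWadm : IsAdmissible att ℓ m n (gradedDefense att m n W) := by
    refine ⟨?_, def_mono hWD⟩
    exact (hDWint.trans (sInter_subset_of_mem hE0)).trans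
      ((hS E0 hE0).1.trans (neut_anti (hDWint.trans (sInter_subset_of_mem hE0))))
  have hDWsub : gradedDefense att m n W ⊆ W := subset_sUnion_of_mem ⟨hDWadm, hDWint⟩
  refine ⟨⟨hWcf, Subset.antisymm hWD hDWsub⟩, hWE, ?_⟩
  intro E' hE' hE'S
  exact subset_sUnion_of_mem ⟨⟨hE'.1, hE'.2.le⟩, subset_sInter hE'S⟩
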